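/- (Honeycomb example: multiplicities in the diffraction pattern, via S₃-symmetry.) Let W(u_1, u_2) = (u_1 + u_2 + 1)(u_1^{−1} + u_2^{−1} + 1) and for N ≥ 1 and r ∈ ℂ set mult_N(r) = #{(ζ_1, ζ_2) ∈ μ_N × μ_N : W(ζ_1, ζ_2) = r}, where μ_N ⊂ ℂ^× is the group of N-th roots of unity. Then for every N ≥ 1: (i) mult_N(9) = 1; (ii) if 3 divides N then mult_N(0) = 2; (iii) if 2 divides N then mult_N(1) ≡ 3 (mod 6); and (iv) for every r ∉ {0, 1, 9}, mult_N(r) ≡ 0 (mod 6). -/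

import Mathlib

/-!
On the torus `|u| = |v| = 1` we have `u⁻¹ = conj u`, so `W(u, v) = |u + v + 1|²`. Hence `W = 9`
forces `u = v = 1`, and `W = 0` forces `u + v + 1 = 0`, i.e. `u` is a primitive cube root of unity
and `v = u⁻¹`.

The fibres of `W` on `μ_N × μ_N` are stable under the involution `(u, v) ↦ (u⁻¹, v⁻¹)` and the
rotation `(u, v) ↦ (v⁻¹, u v⁻¹)` of order 3, which together generate the `S₃`-symmetry. A map of
prime order `p` on a finite set has as many fixed points as the set has elements, modulo `p`. The
rotation fixes only points where `W ∈ {0, 9}`, and the involution only the points `(±1, ±1)`, where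
`W ∈ {1, 9}`; three of them lie over `1` when `N` is even.
-/

open scoped BigOperators

/-- The honeycomb function `W(u₁, u₂) = (u₁ + u₂ + 1)(u₁⁻¹ + u₂⁻¹ + 1)`. -/
noncomputable def Whc (u₁ u₂ : ℂ) : ℂ := (u₁ + u₂ + 1) * (u₁⁻¹ + u₂⁻¹ + 1)

open scoped Classical in
/-- `mult_N(r) = #{(ζ₁, ζ₂) ∈ μ_N × μ_N : W(ζ₁, ζ₂) = r}`. -/
noncomputable def multN (N : ℕ) (r : ℂ) : ℕ :=
  ((Polynomial.nthRootsFinset N (1 : ℂ) ×ˢ Polynomial.nthRootsFinset N (1 : ℂ)).filter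
    (fun p => Whc p.1 p.2 = r)).card

open Finset in
theorem Finset.card_modEq_card_filter_apply_eq_self {α : Type*} [DecidableEq α] {p : ℕ}
    [Fact p.Prime] {s : Finset α} {f : α → α} (hs : Set.MapsTo f s s)
    (hf : ∀ x ∈ s, f^[p] x = x) :
    #s ≡ #{x ∈ s | f x = x} [MOD p] := by
  let g : Function.End s := fun x => ⟨f x, hs x.2⟩
  have hg_iter (n : ℕ) (x : s) : ((g ^ n) x : α) = f^[n] x := by
    induction n generalizing x with
    | zero => rfl
    | succ n ih => exact ih (g x)
  have hg : g ^ p ^ 1 = 1 := funext fun x => Subtype.ext <| by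
    rw [pow_one, hg_iter]
    exact hf x x.2
  have hfix : Fintype.card (Function.fixedPoints g) = #{x ∈ s | f x = x} :=
    calc Fintype.card (Function.fixedPoints g)
        = Fintype.card {x : s // f x = x} :=
          Fintype.card_congr (Equiv.subtypeEquivRight fun x => by
            simp [Function.IsFixedPt, g, Subtype.ext_iff])
      _ = #{x ∈ s | f x = x} := by
          rw [Fintype.card_subtype, univ_eq_attach, filter_attach (fun x => f x = x), card_map,
            card_attach]
  simpa [hfix] using Equiv.Perm.card_fixedPoints_modEq hg

namespace Honeycomb

open Polynomial Finset Complex ComplexConjugate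

variable {N : ℕ} {r u v : ℂ}

lemma Whc_eq_normSq (hu : ‖u‖ = 1) (hv : ‖v‖ = 1) : Whc u v = normSq (u + v + 1) := by
  rw [Whc, inv_eq_conj hu, inv_eq_conj hv, ← mul_conj]
  simp

lemma Whc_eq_zero_iff (hu : ‖u‖ = 1) (hv : ‖v‖ = 1) : Whc u v = 0 ↔ u + v + 1 = 0 := by
  rw [Whc_eq_normSq hu hv, ofReal_eq_zero, normSq_eq_zero]

lemma eq_one_of_Whc_eq_nine (hu : ‖u‖ = 1) (hv : ‖v‖ = 1) (h : Whc u v = 9) :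
    u = 1 ∧ v = 1 := by
  have h9 : normSq (u + v + 1) = 9 := by exact_mod_cast (Whc_eq_normSq hu hv).symm.trans h
  have hu' : u.re * u.re + u.im * u.im = 1 := by
    rw [← normSq_apply, normSq_eq_norm_sq, hu, one_pow]
  have hv' : v.re * v.re + v.im * v.im = 1 := by
    rw [← normSq_apply, normSq_eq_norm_sq, hv, one_pow]
  simp only [normSq_apply, add_re, add_im, one_re, one_im] at h9
  have hre : u.re = 1 ∧ v.re = 1 := by
    constructor <;> nlinarith [sq_nonneg (u.re - v.re), sq_nonneg (u.im - v.im),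
      sq_nonneg (u.re - 1), sq_nonneg (v.re - 1)]
  have him : u.im = 0 ∧ v.im = 0 := by
    constructor <;> nlinarith
  exact ⟨Complex.ext (by simp [hre.1]) (by simp [him.1]),
    Complex.ext (by simp [hre.2]) (by simp [him.2])⟩

lemma isPrimitiveRoot_three_iff : IsPrimitiveRoot u 3 ↔ u ^ 2 + u + 1 = 0 := by
  rw [← isRoot_cyclotomic_iff_charZero (by norm_num), cyclotomic_three]
  simp

lemma add_add_one_eq_zero_iff (hu : ‖u‖ = 1) (hv : ‖v‖ = 1) :
    u + v + 1 = 0 ↔ IsPrimitiveRoot u 3 ∧ v = u⁻¹ := by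
  have hu0 : u ≠ 0 := norm_ne_zero_iff.mp (by simp [hu])
  have hv0 : v ≠ 0 := norm_ne_zero_iff.mp (by simp [hv])
  rw [isPrimitiveRoot_three_iff]
  constructor
  · intro h
    have hconj : u⁻¹ + v⁻¹ + 1 = 0 := by
      simpa [inv_eq_conj hu, inv_eq_conj hv] using congrArg conj h
    have huv : u * v = 1 := by
      field_simp at hconj
      linear_combination hconj - h
    exact ⟨by linear_combination u * h - huv, eq_inv_of_mul_eq_one_right huv⟩
  · rintro ⟨h, rfl⟩
    field_simp
    linear_combination h

open scoped Classical in
noncomputable def fiber (N : ℕ) (r : ℂ) : Finset (ℂ × ℂ) :=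
  {p ∈ nthRootsFinset N (1 : ℂ) ×ˢ nthRootsFinset N (1 : ℂ) | Whc p.1 p.2 = r}

lemma multN_eq_card_fiber (N : ℕ) (r : ℂ) : multN N r = #(fiber N r) := rfl

lemma mem_fiber (hN : N ≠ 0) {p : ℂ × ℂ} :
    p ∈ fiber N r ↔ p.1 ^ N = 1 ∧ p.2 ^ N = 1 ∧ Whc p.1 p.2 = r := by
  simp [fiber, mem_nthRootsFinset (Nat.pos_of_ne_zero hN), and_assoc]

lemma norm_eq_one_of_mem_fiber (hN : N ≠ 0) {p : ℂ × ℂ} (hp : p ∈ fiber N r) :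
    ‖p.1‖ = 1 ∧ ‖p.2‖ = 1 :=
  have h := (mem_fiber hN).mp hp
  ⟨norm_eq_one_of_pow_eq_one h.1 hN, norm_eq_one_of_pow_eq_one h.2.1 hN⟩

lemma ne_zero_of_mem_fiber (hN : N ≠ 0) {p : ℂ × ℂ} (hp : p ∈ fiber N r) :
    p.1 ≠ 0 ∧ p.2 ≠ 0 :=
  have h := norm_eq_one_of_mem_fiber hN hp
  ⟨norm_ne_zero_iff.mp (by simp [h.1]), norm_ne_zero_iff.mp (by simp [h.2])⟩

lemma fiber_nine (hN : N ≠ 0) : fiber N 9 = {(1, 1)} := by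
  ext ⟨u, v⟩
  rw [mem_fiber hN, mem_singleton, Prod.mk.injEq]
  constructor
  · rintro ⟨hu, hv, h⟩
    exact eq_one_of_Whc_eq_nine (norm_eq_one_of_pow_eq_one hu hN)
      (norm_eq_one_of_pow_eq_one hv hN) h
  · rintro ⟨rfl, rfl⟩
    norm_num [Whc]

lemma fiber_zero (h3 : 3 ∣ N) (hN : N ≠ 0) :
    fiber N 0 =
      (primitiveRoots 3 ℂ).map ⟨fun u => (u, u⁻¹), fun _ _ h => congrArg Prod.fst h⟩ := by
  ext ⟨u, v⟩
  simp only [mem_fiber hN, mem_map, mem_primitiveRoots three_pos]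
  constructor
  · rintro ⟨hu, hv, h⟩
    have hu1 := norm_eq_one_of_pow_eq_one hu hN
    have hv1 := norm_eq_one_of_pow_eq_one hv hN
    obtain ⟨hprim, rfl⟩ := (add_add_one_eq_zero_iff hu1 hv1).mp ((Whc_eq_zero_iff hu1 hv1).mp h)
    exact ⟨u, hprim, rfl⟩
  · rintro ⟨u, hprim, ⟨⟩⟩
    have hu : u ^ N = 1 := (hprim.pow_eq_one_iff_dvd N).mpr h3
    have hu1 := norm_eq_one_of_pow_eq_one hu hN
    have hv1 : ‖u⁻¹‖ = 1 := by rw [norm_inv, hu1, inv_one]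
    refine ⟨hu, by rw [inv_pow, hu, inv_one], ?_⟩
    exact (Whc_eq_zero_iff hu1 hv1).mpr ((add_add_one_eq_zero_iff hu1 hv1).mpr ⟨hprim, rfl⟩)

lemma card_fiber_zero (h3 : 3 ∣ N) (hN : N ≠ 0) : #(fiber N 0) = 2 := by
  rw [fiber_zero h3 hN, card_map, Complex.card_primitiveRoots, Nat.totient_prime Nat.prime_three]

/-- Cyclically permutes the monomials `u, v, 1` of `u + v + 1` up to the common factor `v⁻¹`. -/
noncomputable def rot (p : ℂ × ℂ) : ℂ × ℂ := (p.2⁻¹, p.1 * p.2⁻¹)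

lemma Whc_inv_inv (u v : ℂ) : Whc u⁻¹ v⁻¹ = Whc u v := by
  rw [Whc, Whc, inv_inv, inv_inv, mul_comm]

lemma Whc_rot (hu : u ≠ 0) (hv : v ≠ 0) : Whc v⁻¹ (u * v⁻¹) = Whc u v := by
  unfold Whc
  field_simp
  ring

lemma rot_iterate_three (hu : u ≠ 0) (hv : v ≠ 0) : rot^[3] (u, v) = (u, v) := by
  show rot (rot (rot (u, v))) = (u, v)
  simp only [rot, Prod.mk.injEq]
  constructor <;> field_simp

lemma Whc_eq_zero_or_nine_of_rot_eq (hv : v ≠ 0) (h : rot (u, v) = (u, v)) :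
    Whc u v = 0 ∨ Whc u v = 9 := by
  obtain ⟨rfl, hvv⟩ : v⁻¹ = u ∧ u * v⁻¹ = v := Prod.mk.inj h
  have hv3 : (v - 1) * (v ^ 2 + v + 1) = 0 := by
    field_simp at hvv
    linear_combination -hvv
  rcases mul_eq_zero.mp hv3 with h1 | h2
  · right
    rw [sub_eq_zero.mp h1]
    norm_num [Whc]
  · left
    rw [Whc, mul_eq_zero]
    left
    field_simp
    linear_combination h2

lemma mapsTo_rot_fiber (hN : N ≠ 0) : Set.MapsTo rot (fiber N r) (fiber N r) := by
  rintro ⟨u, v⟩ hp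
  obtain ⟨hu, hv, h⟩ := (mem_fiber hN).mp hp
  obtain ⟨hu0, hv0⟩ := ne_zero_of_mem_fiber hN hp
  refine (mem_fiber hN).mpr ⟨?_, ?_, (Whc_rot hu0 hv0).trans h⟩
  · simp [rot, hv]
  · simp [rot, mul_pow, hu, hv]

lemma mapsTo_inv_fiber (hN : N ≠ 0) :
    Set.MapsTo Inv.inv (fiber N r : Set (ℂ × ℂ)) (fiber N r) := by
  rintro ⟨u, v⟩ hp
  obtain ⟨hu, hv, h⟩ := (mem_fiber hN).mp hp
  exact (mem_fiber hN).mpr ⟨by simp [hu], by simp [hv], (Whc_inv_inv u v).trans h⟩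

lemma card_fiber_modEq_card_filter_rot (hN : N ≠ 0) :
    #(fiber N r) ≡ #{p ∈ fiber N r | rot p = p} [MOD 3] :=
  card_modEq_card_filter_apply_eq_self (mapsTo_rot_fiber hN) fun _ hp =>
    rot_iterate_three (ne_zero_of_mem_fiber hN hp).1 (ne_zero_of_mem_fiber hN hp).2

lemma card_fiber_modEq_card_filter_inv (hN : N ≠ 0) :
    #(fiber N r) ≡ #{p ∈ fiber N r | p⁻¹ = p} [MOD 2] :=
  card_modEq_card_filter_apply_eq_self (mapsTo_inv_fiber hN) fun _ _ => by simp

lemma three_dvd_card_fiber (hN : N ≠ 0) (hr0 : r ≠ 0) (hr9 : r ≠ 9) : 3 ∣ #(fiber N r) := by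
  have hfix : {p ∈ fiber N r | rot p = p} = ∅ := by
    refine filter_eq_empty_iff.mpr fun ⟨u, v⟩ hp hrot => ?_
    obtain ⟨-, -, h⟩ := (mem_fiber hN).mp hp
    rcases Whc_eq_zero_or_nine_of_rot_eq (ne_zero_of_mem_fiber hN hp).2 hrot with h' | h'
    exacts [hr0 (h.symm.trans h'), hr9 (h.symm.trans h')]
  simpa [hfix, Nat.modEq_zero_iff_dvd] using card_fiber_modEq_card_filter_rot (r := r) hN

lemma eq_neg_one_or_one_of_inv_eq (hu : u ≠ 0) (hv : v ≠ 0) (h : (u, v)⁻¹ = (u, v)) :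
    (u = -1 ∨ u = 1) ∧ (v = -1 ∨ v = 1) := by
  obtain ⟨hu', hv'⟩ : u⁻¹ = u ∧ v⁻¹ = v := Prod.mk.inj h
  rw [inv_eq_self₀] at hu' hv'
  tauto

lemma Whc_eq_one_or_nine_of_inv_eq (hu : u ≠ 0) (hv : v ≠ 0) (h : (u, v)⁻¹ = (u, v)) :
    Whc u v = 1 ∨ Whc u v = 9 := by
  obtain ⟨rfl | rfl, rfl | rfl⟩ := eq_neg_one_or_one_of_inv_eq hu hv h <;> norm_num [Whc]

lemma two_dvd_card_fiber (hN : N ≠ 0) (hr1 : r ≠ 1) (hr9 : r ≠ 9) : 2 ∣ #(fiber N r) := by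
  have hfix : {p ∈ fiber N r | p⁻¹ = p} = ∅ := by
    refine filter_eq_empty_iff.mpr fun ⟨u, v⟩ hp hinv => ?_
    obtain ⟨-, -, h⟩ := (mem_fiber hN).mp hp
    obtain ⟨hu0, hv0⟩ := ne_zero_of_mem_fiber hN hp
    rcases Whc_eq_one_or_nine_of_inv_eq hu0 hv0 hinv with h' | h'
    exacts [hr1 (h.symm.trans h'), hr9 (h.symm.trans h')]
  simpa [hfix, Nat.modEq_zero_iff_dvd] using card_fiber_modEq_card_filter_inv (r := r) hN

lemma filter_fiber_one_inv_eq_self (h2 : 2 ∣ N) (hN : N ≠ 0) :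
    {p ∈ fiber N 1 | p⁻¹ = p} = {(-1, -1), (-1, 1), (1, -1)} := by
  have hneg : (-1 : ℂ) ^ N = 1 := (even_iff_two_dvd.mpr h2).neg_one_pow
  ext ⟨u, v⟩
  simp only [mem_filter, mem_insert, mem_singleton, Prod.mk.injEq]
  constructor
  · rintro ⟨hp, hinv⟩
    have h := ((mem_fiber hN).mp hp).2.2
    obtain ⟨hu0, hv0⟩ := ne_zero_of_mem_fiber hN hp
    obtain ⟨rfl | rfl, rfl | rfl⟩ := eq_neg_one_or_one_of_inv_eq hu0 hv0 hinv
    all_goals norm_num [Whc] at *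
  · rintro (⟨rfl, rfl⟩ | ⟨rfl, rfl⟩ | ⟨rfl, rfl⟩) <;> norm_num [mem_fiber hN, Whc, hneg]

lemma card_fiber_one_modEq (h2 : 2 ∣ N) (hN : N ≠ 0) : #(fiber N 1) ≡ 3 [MOD 2] := by
  have hfix : #{p ∈ fiber N 1 | p⁻¹ = p} = 3 := by
    rw [filter_fiber_one_inv_eq_self h2 hN]
    norm_num
  simpa [hfix] using card_fiber_modEq_card_filter_inv (r := 1) hN

end Honeycomb

/-- Honeycomb example, multiplicities in the diffraction pattern via the `S₃`-symmetry:
for every `N ≥ 1`: (i) `mult_N(9) = 1`; (ii) if `3 ∣ N` then `mult_N(0) = 2`;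
(iii) if `2 ∣ N` then `mult_N(1) ≡ 3 (mod 6)`; (iv) `mult_N(r) ≡ 0 (mod 6)` for
`r ∉ {0, 1, 9}`. -/
theorem honeycomb_multiplicities (N : ℕ) (hN : 1 ≤ N) :
    multN N 9 = 1 ∧
    (3 ∣ N → multN N 0 = 2) ∧
    (2 ∣ N → multN N 1 ≡ 3 [MOD 6]) ∧
    (∀ r : ℂ, r ∉ ({0, 1, 9} : Set ℂ) → multN N r ≡ 0 [MOD 6]) := by
  have hN0 : N ≠ 0 := Nat.one_le_iff_ne_zero.mp hN
  simp only [Honeycomb.multN_eq_card_fiber]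
  refine ⟨by rw [Honeycomb.fiber_nine hN0, Finset.card_singleton],
    fun h3 => Honeycomb.card_fiber_zero h3 hN0, fun h2 => ?_, fun r hr => ?_⟩
  · have hmod2 := Honeycomb.card_fiber_one_modEq h2 hN0
    have hdvd3 := Honeycomb.three_dvd_card_fiber hN0 one_ne_zero (by norm_num)
    unfold Nat.ModEq at *
    omega
  · simp only [Set.mem_insert_iff, Set.mem_singleton_iff, not_or] at hr
    obtain ⟨hr0, hr1, hr9⟩ := hr
    exact Nat.modEq_zero_iff_dvd.mpr <| Nat.Coprime.mul_dvd_of_dvd_of_dvd (by norm_num)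
      (Honeycomb.two_dvd_card_fiber hN0 hr1 hr9) (Honeycomb.three_dvd_card_fiber hN0 hr0 hr9)
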